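/- Let a > 0 and n be a positive integer, and let W̃ be an N×N matrix with all entries positive and with identical rows, i.e. w̃_{j,k} = w̃_{i,k} > 0 for all 1 ≤ i, j, k ≤ N. Let v : [0,∞) → (0,1)^N be a solution of the gradient flow ∂_t v = −∇_v E(v,W̃) whose initial positions v_1(0), …, v_N(0) are pairwise distinct. Then for all t ≥ 0 the positions v_1(t), …, v_N(t) remain pairwise distinct; in particular the initial rank-order of the positions is preserved for all times. -/

import Mathlib

/-!
With identical rows the weight `w̃_{ik}` does not depend on `i`, so every particle moves with the
same velocity field `x ↦ ∑ₖ w̃ₖ · φ(vₖ, x)` (`velocity`, with `φ = interaction`), evaluated at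
its own position. For two particles at `x < y` with small gap `g = y - x`, the particle at `y`
pushes the one at `x` away at rate at least `fluxGap a n = a n 2^{1-2n}`, while every other
contribution to the relative velocity changes by at most `2 L g`, `L` being a Lipschitz constant
of `Φ` on each of its two branches. So the gap grows whenever it is small and positive, and a
barrier argument keeps it bounded away from `0`.
-/

open scoped Classical
open Filter Set

/-- Flux `Φ_{a,n}(s) = a·n·(s−1)^(2n−1)` for `s ≥ 0`, extended by
`Φ_{a,n}(s) = a·n·(s+1)^(2n−1)` for `s < 0`. -/
noncomputable def flux (a : ℝ) (n : ℕ) (s : ℝ) : ℝ :=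
  if 0 ≤ s then a * n * (s - 1) ^ (2 * n - 1) else a * n * (s + 1) ^ (2 * n - 1)

lemma flux_of_nonneg (a : ℝ) (n : ℕ) {s : ℝ} (hs : 0 ≤ s) :
    flux a n s = a * n * (s - 1) ^ (2 * n - 1) := if_pos hs

lemma flux_of_neg (a : ℝ) (n : ℕ) {s : ℝ} (hs : s < 0) :
    flux a n s = a * n * (s + 1) ^ (2 * n - 1) := if_neg (not_le.mpr hs)

noncomputable def fluxLip (a : ℝ) (n : ℕ) : ℝ := a * n * ((2 * n - 1 : ℕ) : ℝ)

noncomputable def fluxGap (a : ℝ) (n : ℕ) : ℝ := a * n * (1 / 2) ^ (2 * n - 1)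

lemma fluxLip_nonneg {a : ℝ} (ha : 0 ≤ a) (n : ℕ) : 0 ≤ fluxLip a n := by
  unfold fluxLip
  positivity

lemma fluxGap_nonneg {a : ℝ} (ha : 0 ≤ a) (n : ℕ) : 0 ≤ fluxGap a n := by
  unfold fluxGap
  positivity

lemma fluxLip_pos {a : ℝ} (ha : 0 < a) {n : ℕ} (hn : 0 < n) : 0 < fluxLip a n := by
  have : (0 : ℝ) < ((2 * n - 1 : ℕ) : ℝ) := by exact_mod_cast (by omega : 0 < 2 * n - 1)
  unfold fluxLip
  positivity

lemma fluxGap_pos {a : ℝ} (ha : 0 < a) {n : ℕ} (hn : 0 < n) : 0 < fluxGap a n := by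
  unfold fluxGap
  positivity

lemma mul_pow_sub_mul_pow_le {c u w : ℝ} (hc : 0 ≤ c) (m : ℕ) (hu : |u| ≤ 1) (hw : |w| ≤ 1)
    (hwu : w ≤ u) : c * u ^ m - c * w ^ m ≤ c * m * (u - w) :=
  calc c * u ^ m - c * w ^ m ≤ c * |u ^ m - w ^ m| := by
        rw [← mul_sub]; gcongr; exact le_abs_self _
    _ ≤ c * (|u - w| * m * max |u| |w| ^ (m - 1)) := by gcongr; exact abs_pow_sub_pow_le ..
    _ ≤ c * (|u - w| * m * 1) := by gcongr; exact pow_le_one₀ (by positivity) (max_le hu hw)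
    _ = c * m * (u - w) := by rw [abs_of_nonneg (sub_nonneg.mpr hwu)]; ring

lemma flux_sub_flux_le_of_nonneg {a : ℝ} (ha : 0 ≤ a) (n : ℕ) {s t : ℝ}
    (hs : 0 ≤ s) (hst : s ≤ t) (ht : t ≤ 2) :
    flux a n t - flux a n s ≤ fluxLip a n * (t - s) := by
  rw [flux_of_nonneg a n (hs.trans hst), flux_of_nonneg a n hs, fluxLip]
  have := mul_pow_sub_mul_pow_le (c := a * n) (by positivity) (2 * n - 1)
    (abs_le.mpr ⟨by linarith, by linarith⟩) (abs_le.mpr ⟨by linarith, by linarith⟩)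
    (by linarith : s - 1 ≤ t - 1)
  linarith

lemma flux_sub_flux_le_of_neg {a : ℝ} (ha : 0 ≤ a) (n : ℕ) {s t : ℝ}
    (hs : -2 ≤ s) (hst : s ≤ t) (ht : t < 0) :
    flux a n t - flux a n s ≤ fluxLip a n * (t - s) := by
  rw [flux_of_neg a n ht, flux_of_neg a n (hst.trans_lt ht), fluxLip]
  have := mul_pow_sub_mul_pow_le (c := a * n) (by positivity) (2 * n - 1)
    (abs_le.mpr ⟨by linarith, by linarith⟩) (abs_le.mpr ⟨by linarith, by linarith⟩)
    (by linarith : s + 1 ≤ t + 1)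
  linarith

lemma flux_neg_of_pos (a : ℝ) {n : ℕ} (hn : 0 < n) {d : ℝ} (hd : 0 < d) :
    flux a n (-d) = -flux a n d := by
  have hodd : Odd (2 * n - 1) := ⟨n - 1, by omega⟩
  rw [flux_of_neg a n (neg_neg_of_pos hd), flux_of_nonneg a n hd.le,
    show -d + 1 = -(d - 1) by ring, hodd.neg_pow, mul_neg]

lemma flux_nonneg_of_neg {a : ℝ} (ha : 0 ≤ a) (n : ℕ) {s : ℝ} (h1 : -1 ≤ s) (h0 : s < 0) :
    0 ≤ flux a n s := by
  rw [flux_of_neg a n h0]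
  exact mul_nonneg (by positivity) (pow_nonneg (by linarith) _)

lemma flux_nonpos_of_nonneg {a : ℝ} (ha : 0 ≤ a) {n : ℕ} (hn : 0 < n) {s : ℝ}
    (h0 : 0 ≤ s) (h1 : s ≤ 1) : flux a n s ≤ 0 := by
  rw [flux_of_nonneg a n h0]
  have hodd : Odd (2 * n - 1) := ⟨n - 1, by omega⟩
  exact mul_nonpos_of_nonneg_of_nonpos (by positivity) (hodd.pow_nonpos (by linarith))

lemma flux_le_neg_fluxGap {a : ℝ} (ha : 0 ≤ a) {n : ℕ} (hn : 0 < n) {d : ℝ}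
    (h0 : 0 ≤ d) (hd : d ≤ 1 / 2) : flux a n d ≤ -fluxGap a n := by
  have hodd : Odd (2 * n - 1) := ⟨n - 1, by omega⟩
  rw [flux_of_nonneg a n h0, fluxGap, show d - 1 = -(1 - d) by ring, hodd.neg_pow]
  have : ((1 : ℝ) / 2) ^ (2 * n - 1) ≤ (1 - d) ^ (2 * n - 1) :=
    pow_le_pow_left₀ (by norm_num) (by linarith) _
  have := mul_le_mul_of_nonneg_left this (show (0 : ℝ) ≤ a * n by positivity)
  linarith

/-- The velocity that a particle at `z` induces on a particle at `x`. -/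
noncomputable def interaction (a : ℝ) (n : ℕ) (z x : ℝ) : ℝ :=
  if z = x then -flux a n (2 * x) else flux a n (z - x) - flux a n (z + x)

section Interaction

variable {a : ℝ} {n : ℕ} {x y : ℝ}

lemma interaction_self_sub_ge (ha : 0 ≤ a) (hn : 0 < n) (hx : 0 < x) (hy : y < 1)
    (hxy : x < y) (hgap : y - x ≤ 1 / 2) :
    fluxGap a n - fluxLip a n * (y - x) ≤ interaction a n y y - interaction a n y x := by
  rw [interaction, interaction, if_pos rfl, if_neg hxy.ne']
  have h₁ := flux_le_neg_fluxGap ha hn (d := y - x) (by linarith) hgap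
  have h₂ := flux_sub_flux_le_of_nonneg ha n (s := y + x) (t := 2 * y)
    (by linarith) (by linarith) (by linarith)
  linarith

lemma interaction_sub_ge (ha : 0 ≤ a) (hn : 0 < n) {z : ℝ} (hz : z ∈ Ioo 0 1) (hx : 0 < x)
    (hy : y < 1) (hxy : x < y) (hgap : y - x ≤ 1 / 2) :
    -(2 * fluxLip a n * (y - x)) ≤ interaction a n z y - interaction a n z x := by
  obtain ⟨hz0, hz1⟩ := hz
  have hL : 0 ≤ fluxLip a n * (y - x) := mul_nonneg (fluxLip_nonneg ha n) (by linarith)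
  have hG := fluxGap_nonneg ha n
  have hsum := flux_sub_flux_le_of_nonneg ha n (s := z + x) (t := z + y)
    (by linarith) (by linarith) (by linarith)
  rcases lt_trichotomy z x with hzx | rfl | hxz
  · simp only [interaction, if_neg (hzx.trans hxy).ne, if_neg hzx.ne]
    have := flux_sub_flux_le_of_neg ha n (s := z - y) (t := z - x)
      (by linarith) (by linarith) (by linarith)
    linarith
  · rw [interaction, interaction, if_neg hxy.ne, if_pos rfl, ← neg_sub y z,
      flux_neg_of_pos a hn (by linarith)]
    have h₁ := flux_le_neg_fluxGap ha hn (d := y - z) (by linarith) hgap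
    have h₂ := flux_sub_flux_le_of_nonneg ha n (s := 2 * z) (t := z + y)
      (by linarith) (by linarith) (by linarith)
    linarith
  rcases lt_trichotomy z y with hzy | rfl | hyz
  · -- a particle strictly between `x` and `y` pushes `y` up and `x` down
    simp only [interaction, if_neg hzy.ne, if_neg hxz.ne']
    have h₁ := flux_nonneg_of_neg ha n (s := z - y) (by linarith) (by linarith)
    have h₂ := flux_nonpos_of_nonneg ha hn (s := z - x) (by linarith) (by linarith)
    linarith
  · linarith [interaction_self_sub_ge ha hn hx hy hxy hgap]
  · simp only [interaction, if_neg hyz.ne', if_neg (hxy.trans hyz).ne']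
    have := flux_sub_flux_le_of_nonneg ha n (s := z - y) (t := z - x)
      (by linarith) (by linarith) (by linarith)
    linarith

end Interaction

noncomputable def velocity {ι : Type*} [Fintype ι] (a : ℝ) (n : ℕ) (w u : ι → ℝ) (x : ℝ) : ℝ :=
  ∑ k, w k * interaction a n (u k) x

section Velocity

variable {ι : Type*} [Fintype ι]

lemma filter_sum_sub_filter_sum_eq_velocity (a : ℝ) (n : ℕ) (w u : ι → ℝ) (x : ℝ) :
    (∑ k ∈ Finset.univ.filter (fun k => u k ≠ x),
        w k * (flux a n (u k - x) - flux a n (u k + x))) -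
      ∑ k ∈ Finset.univ.filter (fun k => u k = x), w k * flux a n (2 * x) =
    velocity a n w u x := by
  rw [Finset.sum_filter, Finset.sum_filter, ← Finset.sum_sub_distrib]
  refine Finset.sum_congr rfl fun k _ => ?_
  by_cases h : u k = x <;> simp [interaction, h]

lemma velocity_sub_velocity_ge {a : ℝ} {n : ℕ} (ha : 0 ≤ a) (hn : 0 < n) {w u : ι → ℝ} (hw : ∀ k, 0 ≤ w k)
    (hu : ∀ k, u k ∈ Ioo 0 1) {i j : ι} (hij : u i < u j) (hgap : u j - u i ≤ 1 / 2) :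
    w j * fluxGap a n - 2 * fluxLip a n * (∑ k, w k) * (u j - u i) ≤
      velocity a n w u (u j) - velocity a n w u (u i) := by
  have hterm : ∀ k ∈ Finset.univ,
      (if k = j then w j * fluxGap a n else 0) - w k * (2 * fluxLip a n * (u j - u i)) ≤
        w k * interaction a n (u k) (u j) - w k * interaction a n (u k) (u i) := by
    intro k _
    rw [← mul_sub]
    split_ifs with hk
    · subst hk
      rw [← mul_sub]
      refine mul_le_mul_of_nonneg_left ?_ (hw k)
      have hL := mul_nonneg (fluxLip_nonneg ha n) (sub_nonneg.mpr hij.le)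
      linarith [interaction_self_sub_ge ha hn (hu i).1 (hu k).2 hij hgap]
    · rw [zero_sub, ← mul_neg]
      exact mul_le_mul_of_nonneg_left (interaction_sub_ge ha hn (hu k) (hu i).1 (hu j).2 hij hgap)
        (hw k)
  have := Finset.sum_le_sum hterm
  rw [Finset.sum_sub_distrib, Finset.sum_sub_distrib, Finset.sum_ite_eq'] at this
  simp only [Finset.mem_univ, if_true, ← Finset.sum_mul] at this
  unfold velocity
  linarith

end Velocity

lemma forall_pos_of_deriv_pos_near_zero {g g' : ℝ → ℝ} {δ : ℝ} (hδ : 0 < δ)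
    (hg : ∀ t ∈ Ici (0 : ℝ), HasDerivAt g (g' t) t) (h0 : 0 < g 0)
    (hpush : ∀ t ∈ Ici (0 : ℝ), 0 < g t → g t < δ → 0 < g' t) :
    ∀ t ∈ Ici (0 : ℝ), 0 < g t := by
  intro t ht
  set c := min (g 0) δ / 2 with hcdef
  have hc : 0 < c := by positivity
  suffices -g t ≤ -c by linarith
  refine image_le_of_deriv_right_lt_deriv_boundary (f := fun s => -g s) (f' := fun s => -g' s)
    (B := fun _ => -c) (B' := fun _ => 0) (fun s hs => ?_) (fun s hs => ?_) ?_
    (fun _ => hasDerivAt_const _ _) (fun s hs hs' => ?_) ⟨ht, le_rfl⟩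
  · exact (hg s hs.1).neg.continuousAt.continuousWithinAt
  · exact (hg s hs.1).neg.hasDerivWithinAt
  · exact neg_le_neg (by linarith [min_le_left (g 0) δ])
  · have hgs : g s = c := neg_inj.mp hs'
    exact neg_neg_of_pos <|
      hpush s hs.1 (hgs ▸ hc) (by linarith [min_le_right (g 0) δ, min_le_left (g 0) δ])

theorem stmt8 (a : ℝ) (ha : 0 < a) (n : ℕ) (hn : 0 < n) (N : ℕ)
    (W : Matrix (Fin N) (Fin N) ℝ)
    (hpos : ∀ i k, 0 < W i k) (hrows : ∀ i j k, W j k = W i k)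
    (v : ℝ → Fin N → ℝ)
    (hmem : ∀ t ∈ Set.Ici (0 : ℝ), ∀ i, v t i ∈ Set.Ioo (0 : ℝ) 1)
    (hode : ∀ t ∈ Set.Ici (0 : ℝ), ∀ i, HasDerivAt (fun s => v s i)
      ((∑ j ∈ Finset.univ.filter (fun j => v t j ≠ v t i),
          W i j * (flux a n (v t j - v t i) - flux a n (v t j + v t i))) -
        ∑ j ∈ Finset.univ.filter (fun j => v t j = v t i),
          W i j * flux a n (2 * v t i)) t)
    (hdist : ∀ i j, i ≠ j → v 0 i ≠ v 0 j) :
    (∀ t ∈ Set.Ici (0 : ℝ), ∀ i j, i ≠ j → v t i ≠ v t j) ∧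
    (∀ t ∈ Set.Ici (0 : ℝ), ∀ i j, v 0 i < v 0 j → v t i < v t j) := by
  have order : ∀ t ∈ Set.Ici (0 : ℝ), ∀ i j, v 0 i < v 0 j → v t i < v t j := by
    intro t ht i j hij
    simp only [filter_sum_sub_filter_sum_eq_velocity] at hode
    have hrow : W j = W i := funext (hrows i j)
    have hK : 0 < 2 * fluxLip a n * ∑ k, W i k :=
      mul_pos (mul_pos two_pos (fluxLip_pos ha hn)) (Finset.sum_pos (fun k _ => hpos i k)
        ⟨i, Finset.mem_univ i⟩)
    refine sub_pos.mp <| forall_pos_of_deriv_pos_near_zero (g := fun s => v s j - v s i)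
      (δ := min (1 / 2) (W i j * fluxGap a n / (2 * fluxLip a n * ∑ k, W i k)))
      (lt_min one_half_pos (div_pos (mul_pos (hpos i j) (fluxGap_pos ha hn)) hK))
      (fun s hs => hrow ▸ (hode s hs j).sub (hode s hs i)) (sub_pos.mpr hij) ?_ t ht
    intro s hs hgap hsmall
    have hlin := (lt_div_iff₀' hK).mp (hsmall.trans_le (min_le_right _ _))
    have := velocity_sub_velocity_ge ha.le hn (fun k => (hpos i k).le) (hmem s hs)
      (sub_pos.mp hgap) (hsmall.le.trans (min_le_left _ _))
    linarith
  refine ⟨fun t ht i j hij => ?_, order⟩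
  rcases (hdist i j hij).lt_or_gt with h | h
  · exact (order t ht i j h).ne
  · exact (order t ht j i h).ne'
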